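/- arXiv:2009.10671 — 2 statements merged into one kernel-verified Lean document; each statement's English description precedes it below -/
import Mathlib

section
/- For every ordered graph H and every ε>0 there exists δ>0 such that for every H-free ordered graph G, there exists X ⊆ V(G) with |X| ≥ δ|G| such that in one of G[X], the complement of G[X], every vertex of X has degree less than ε|X|. -/
/-- The max-degree from `X` to `Y`: the maximum over `v ∈ X` of the number of
neighbours of `v` in `Y` (0 if `X` is empty). -/
noncomputable def maxDegFrom {V : Type} (G : SimpleGraph V) (X Y : Set V) : ℕ :=
  sSup ((fun v => (G.neighborSet v ∩ Y).ncard) '' X)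

/-- `X` is anticomplete to `Y`: there are no edges between them. -/
def AnticompSets {V : Type} (G : SimpleGraph V) (X Y : Set V) : Prop :=
  ∀ x ∈ X, ∀ y ∈ Y, ¬ G.Adj x y

/-- A pure pair: disjoint sets, complete or anticomplete to each other. -/
def PurePair {V : Type} (G : SimpleGraph V) (Z1 Z2 : Set V) : Prop :=
  Disjoint Z1 Z2 ∧ ((∀ x ∈ Z1, ∀ y ∈ Z2, G.Adj x y) ∨ AnticompSets G Z1 Z2)

/-- `X` covers `B`: every vertex of `B` has a neighbour in `X`. -/
def CoversSet {V : Type} (G : SimpleGraph V) (X B : Set V) : Prop :=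
  ∀ v ∈ B, ∃ x ∈ X, G.Adj x v

/-- `G` contains `H` as an induced subgraph. -/
def GraphContains {V W : Type} (G : SimpleGraph V) (H : SimpleGraph W) : Prop :=
  ∃ f : W → V, Function.Injective f ∧ ∀ a b : W, G.Adj (f a) (f b) ↔ H.Adj a b

/-- The ordered graph `G` contains the ordered graph `H`: an order-preserving
induced-subgraph embedding. -/
def OrdGraphContains {V W : Type} [LinearOrder V] [LinearOrder W]
    (G : SimpleGraph V) (H : SimpleGraph W) : Prop :=
  ∃ f : W → V, StrictMono f ∧ ∀ a b : W, G.Adj (f a) (f b) ↔ H.Adj a b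

/-- A blockade: a family of pairwise disjoint nonempty vertex subsets indexed by
a finite set of integers. -/
def IsBlockade {V : Type} (I : Finset ℤ) (B : ℤ → Set V) : Prop :=
  (∀ i ∈ I, (B i).Nonempty) ∧ ∀ i ∈ I, ∀ j ∈ I, i ≠ j → Disjoint (B i) (B j)

/-- A blockade in an ordered graph: additionally the blocks are intervals
numbered in order. -/
def IsOrdBlockade {V : Type} [LinearOrder V] (I : Finset ℤ) (B : ℤ → Set V) : Prop :=
  IsBlockade I B ∧ ∀ i ∈ I, ∀ j ∈ I, i < j → ∀ u ∈ B i, ∀ v ∈ B j, u < v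

/-- The blockade `(B i : i ∈ I)` has width at least `w`
(the width being the minimum cardinality of a block, `|G|` if `I = ∅`). -/
def WidthGE {V : Type} [Fintype V] (I : Finset ℤ) (B : ℤ → Set V) (w : ℝ) : Prop :=
  (∀ i ∈ I, w ≤ ((B i).ncard : ℝ)) ∧ w ≤ (Fintype.card V : ℝ)

/-- The width of a blockade: the minimum cardinality of a block (`|G|` if `I = ∅`). -/
noncomputable def blockadeWidth {V : Type} [Fintype V] (I : Finset ℤ) (B : ℤ → Set V) : ℕ :=
  if h : I.Nonempty then I.inf' h (fun i => (B i).ncard) else Fintype.card V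

/-- The blockade has shrinkage at most `s`: its width is at least `|G|^(1-s)`. -/
def ShrinkageLE {V : Type} [Fintype V] (I : Finset ℤ) (B : ℤ → Set V) (s : ℝ) : Prop :=
  WidthGE I B ((Fintype.card V : ℝ) ^ ((1 : ℝ) - s))

/-- The blockade has linkage at most `lam`: for all distinct `i, j`, the
max-degree from `B i` to `B j` is at most `lam * |B j|`. -/
def LinkageLE {V : Type} (G : SimpleGraph V) (I : Finset ℤ) (B : ℤ → Set V) (lam : ℝ) : Prop :=
  ∀ i ∈ I, ∀ j ∈ I, i ≠ j → (maxDegFrom G (B i) (B j) : ℝ) ≤ lam * ((B j).ncard : ℝ)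

/-- The blockade is `(phi, mu)`-shrink-resistant. -/
def ShrinkResistant {V : Type} [Fintype V] (G : SimpleGraph V) (I : Finset ℤ)
    (B : ℤ → Set V) (phi mu : ℝ) : Prop :=
  ∀ h ∈ I, ∀ j ∈ I, h ≠ j → ∀ X ⊆ B h, ∀ Y ⊆ B j,
    mu * ((B h).ncard : ℝ) ≤ (X.ncard : ℝ) → mu * ((B j).ncard : ℝ) ≤ (Y.ncard : ℝ) →
    (maxDegFrom G (B h) (B j) : ℝ) * (Fintype.card V : ℝ) ^ (-phi) < (maxDegFrom G X Y : ℝ)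

/-- `tau` is a `(phi, mu)`-band for the blockade `(B i : i ∈ I)`. -/
def IsBand {V : Type} [Fintype V] (G : SimpleGraph V) (I : Finset ℤ)
    (B : ℤ → Set V) (tau phi mu : ℝ) : Prop :=
  ∀ h ∈ I, ∀ j ∈ I, h ≠ j →
    ((maxDegFrom G (B h) (B j) : ℝ) ≤ tau * ((B j).ncard : ℝ)) ∧
    ∀ X ⊆ B h, ∀ Y ⊆ B j,
      mu * ((B h).ncard : ℝ) ≤ (X.ncard : ℝ) → mu * ((B j).ncard : ℝ) ≤ (Y.ncard : ℝ) →
      tau * (Fintype.card V : ℝ) ^ (-phi) * ((B j).ncard : ℝ) < (maxDegFrom G X Y : ℝ)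

/-- There do not exist disjoint anticomplete sets both of size at least `|G|^(1-c)`. -/
def NoBigAnticomp {V : Type} [Fintype V] (G : SimpleGraph V) (c : ℝ) : Prop :=
  ¬ ∃ Z1 Z2 : Set V, Disjoint Z1 Z2 ∧ AnticompSets G Z1 Z2 ∧
      (Fintype.card V : ℝ) ^ ((1 : ℝ) - c) ≤ (Z1.ncard : ℝ) ∧
      (Fintype.card V : ℝ) ^ ((1 : ℝ) - c) ≤ (Z2.ncard : ℝ)

/-- The blockade `(B i : i ∈ H ∪ I ∪ J)` is leaf-covered with partition `(H, I, J)`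
and parameters `w, W, lam, phi, mu, tau`. -/
def LeafCovered {V : Type} [Fintype V] (G : SimpleGraph V) (H I J : Finset ℤ)
    (B : ℤ → Set V) (w W lam phi mu tau : ℝ) : Prop :=
  WidthGE H B w ∧ LinkageLE G H B lam ∧ WidthGE I B W ∧
  (∀ h ∈ H, ∀ j ∈ J, ∃ X ⊆ B j, CoversSet G X (B h) ∧
      ∀ i ∈ (H ∪ I).erase h, AnticompSets G X (B i)) ∧
  IsBand G (I ∪ J) B tau phi mu ∧
  (∀ h ∈ H, ∀ i ∈ I ∪ J, (maxDegFrom G (B h) (B i) : ℝ) ≤ tau * ((B i).ncard : ℝ))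

/-- The clique number of a graph. -/
noncomputable def cliqueNumber {V : Type} (G : SimpleGraph V) : ℕ :=
  sSup {n | ∃ s : Finset V, G.IsNClique n s}

/-!
Split a vertex set into `|H|` consecutive intervals and try to embed `H` greedily, one vertex
per interval, keeping in each later interval an `η`-fraction of candidates with the right
adjacency. Since `G` is `H`-free this fails, and the failure yields two sets of linear size such
that every vertex of the first has at most `η`-proportion of neighbours in the second, in `G`
or in `Gᶜ`; Markov's inequality and trimming make this a two-sided sparse pair of equal sizes.
Iterating inside the second set gives `2T` equal blocks, block `i` sparse to every later block in
`G` or in `Gᶜ` according to `i`. Half of the blocks share the type, and in their union every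
vertex has few neighbours: at most its own block, plus an `ε/4`-fraction of each other block.
-/

open Finset
open scoped Classical

section

variable {V : Type}

noncomputable def degOn (F : SimpleGraph V) (v : V) (B : Finset V) : ℕ := #{u ∈ B | F.Adj v u}

def SparseTo (F : SimpleGraph V) (ε : ℝ) (A B : Finset V) : Prop :=
  ∀ a ∈ A, (degOn F a B : ℝ) ≤ ε * #B

def IsSparsePair (F : SimpleGraph V) (ε : ℝ) (A B : Finset V) : Prop :=
  SparseTo F ε A B ∧ SparseTo F ε B A

lemma degOn_mono (F : SimpleGraph V) (v : V) {B B' : Finset V} (h : B' ⊆ B) :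
    degOn F v B' ≤ degOn F v B :=
  card_le_card (filter_subset_filter _ h)

lemma degOn_le_card (F : SimpleGraph V) (v : V) (B : Finset V) : degOn F v B ≤ #B :=
  card_filter_le _ _

lemma degOn_eq_card_filter {F : SimpleGraph V} {v : V} {B : Finset V} {p : V → Prop}
    [DecidablePred p] (h : ∀ u ∈ B, F.Adj v u ↔ p u) : degOn F v B = #{u ∈ B | p u} :=
  congrArg card (filter_congr h)

lemma degOn_compl (G : SimpleGraph V) {v : V} {B : Finset V} (hv : v ∉ B) :
    degOn Gᶜ v B = #{u ∈ B | ¬ G.Adj v u} :=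
  degOn_eq_card_filter fun u hu => by
    have hvu : v ≠ u := by rintro rfl; exact hv hu
    simp [hvu]

lemma degOn_biUnion_le {ι : Type} (F : SimpleGraph V) (v : V) (Q : Finset ι)
    (S : ι → Finset V) : degOn F v (Q.biUnion S) ≤ ∑ i ∈ Q, degOn F v (S i) := by
  rw [degOn, filter_biUnion]
  exact card_biUnion_le

lemma ncard_neighborSet_inter_coe (F : SimpleGraph V) (v : V) (X : Finset V) :
    (F.neighborSet v ∩ ↑X).ncard = degOn F v X := by
  rw [degOn, ← Set.ncard_coe_finset, coe_filter]
  congr 1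
  ext u
  simp [and_comm]

lemma SparseTo.mono {F : SimpleGraph V} {ε μ K : ℝ} {A A' B B' : Finset V}
    (h : SparseTo F ε A B) (hε : 0 ≤ ε) (hA : A' ⊆ A) (hB : B' ⊆ B)
    (hBK : (#B : ℝ) ≤ K * #B') (hK : ε * K ≤ μ) : SparseTo F μ A' B' := by
  intro a ha
  calc (degOn F a B' : ℝ) ≤ degOn F a B := by exact_mod_cast degOn_mono F a hB
    _ ≤ ε * #B := h a (hA ha)
    _ ≤ ε * (K * #B') := by gcongr
    _ ≤ μ * #B' := by rw [← mul_assoc]; gcongr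

lemma IsSparsePair.mono {F : SimpleGraph V} {ε μ K : ℝ} {A A' B B' : Finset V}
    (h : IsSparsePair F ε A B) (hε : 0 ≤ ε) (hA : A' ⊆ A) (hB : B' ⊆ B)
    (hAK : (#A : ℝ) ≤ K * #A') (hBK : (#B : ℝ) ≤ K * #B') (hK : ε * K ≤ μ) :
    IsSparsePair F μ A' B' :=
  ⟨h.1.mono hε hA hB hBK hK, h.2.mono hε hB hA hAK hK⟩

/-- Markov's inequality applied to the edge count between `A` and `B`. -/
lemma SparseTo.exists_half_sparseTo {F : SimpleGraph V} {ε : ℝ} {A B : Finset V}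
    (h : SparseTo F ε A B) (hε : 0 < ε) (hA : A.Nonempty) :
    ∃ B' ⊆ B, (#B : ℝ) ≤ 2 * #B' ∧ SparseTo F (2 * ε) B' A := by
  set bad := B.filter fun b => 2 * ε * #A < degOn F b A
  refine ⟨B \ bad, sdiff_subset, ?_, fun b hb => ?_⟩
  · have hcount : #bad • (2 * ε * #A) ≤ #A • (ε * #B) := by
      refine card_nsmul_le_card_nsmul (fun b a => F.Adj b a) (fun b hb => ?_)
        (fun a ha => ?_)
      · exact ((mem_filter.1 hb).2).le
      · calc (#(bad.bipartiteBelow (fun b a => F.Adj b a) a) : ℝ) ≤ degOn F a B := by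
              refine Nat.cast_le.2 (card_le_card fun b hb => ?_)
              simp only [bipartiteBelow, mem_filter] at hb ⊢
              exact ⟨(mem_filter.1 hb.1).1, hb.2.symm⟩
          _ ≤ ε * #B := h a ha
    have hApos : (0 : ℝ) < #A := by exact_mod_cast hA.card_pos
    rw [card_sdiff_of_subset (filter_subset _ _), Nat.cast_sub (card_le_card (filter_subset _ _))]
    simp only [nsmul_eq_mul] at hcount
    nlinarith [mul_pos hε hApos]
  · simp only [bad, mem_sdiff, mem_filter, not_and, not_lt] at hb
    exact hb.2 hb.1

lemma SparseTo.exists_isSparsePair {F : SimpleGraph V} {η : ℝ} {K : ℕ} {A B : Finset V}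
    (h : SparseTo F η A B) (hη : 0 < η) (hA : A.Nonempty) (hAB : #A ≤ #B)
    (hBA : #B ≤ K * #A) :
    ∃ A' ⊆ A, ∃ B' ⊆ B, #A' = #B' ∧ (#B : ℝ) ≤ 2 * K * #B' ∧
      IsSparsePair F (4 * K * η) A' B' := by
  obtain ⟨B₁, hB₁, hBB₁, hsp₁⟩ := h.exists_half_sparseTo hη hA
  have hpair : IsSparsePair F (2 * η) A B₁ :=
    ⟨h.mono hη.le subset_rfl hB₁ hBB₁ (by linarith), hsp₁⟩
  obtain ⟨A', hA', hA'k⟩ := exists_subset_card_eq (min_le_left #A #B₁)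
  obtain ⟨B', hB', hB'k⟩ := exists_subset_card_eq (min_le_right #A #B₁)
  have hK : (1 : ℝ) ≤ K := by
    have : 1 ≤ K := Nat.pos_of_mul_pos_right ((hA.card_pos.trans_le hAB).trans_le hBA)
    exact_mod_cast this
  have hBk : (#B : ℝ) ≤ 2 * K * (min #A #B₁ : ℕ) := by
    have hBA' : (#B : ℝ) ≤ K * #A := by exact_mod_cast hBA
    rcases min_cases #A #B₁ with ⟨hmin, -⟩ | ⟨hmin, -⟩ <;> rw [hmin] <;> nlinarith
  have hAk : (#A : ℝ) ≤ 2 * K * (min #A #B₁ : ℕ) := le_trans (by exact_mod_cast hAB) hBk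
  refine ⟨A', hA', B', hB'.trans hB₁, hA'k.trans hB'k.symm, hB'k ▸ hBk,
    hpair.mono (by positivity) hA' hB' (hA'k ▸ hAk) ?_ (by linarith)⟩
  exact le_trans (by exact_mod_cast card_le_card hB₁) (hB'k ▸ hBk)

lemma exists_degOn_eq_card_adj_iff (G : SimpleGraph V) (p : Prop) :
    ∃ F : SimpleGraph V, (F = G ∨ F = Gᶜ) ∧
      ∀ x B, x ∉ B → degOn F x B = #{u ∈ B | G.Adj x u ↔ p} := by
  by_cases hp : p
  · exact ⟨G, Or.inl rfl, fun x B _ => degOn_eq_card_filter fun u _ => by simp [hp]⟩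
  · refine ⟨Gᶜ, Or.inr rfl, fun x B hx => ?_⟩
    rw [degOn_compl G hx]
    exact congrArg card (filter_congr fun u _ => by simp [hp])

section Greedy

variable [LinearOrder V] (G : SimpleGraph V)

/-- Pigeonhole over the later block in which each candidate for the first vertex of `H` fails. -/
lemma exists_sparseTo_of_forall_exists_lt {n s : ℕ} {η : ℝ} (H : SimpleGraph (Fin (n + 1)))
    (C : Fin (n + 1) → Finset V) (hs : 0 < s) (hC : ∀ i, #(C i) = s)
    (hord : ∀ i j, i < j → ∀ u ∈ C i, ∀ v ∈ C j, u < v)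
    (hbad : ∀ x ∈ C 0, ∃ j : Fin n,
      #{u ∈ C j.succ | G.Adj x u ↔ H.Adj 0 j.succ} < η * s) :
    ∃ F A, ∃ j : Fin n, (F = G ∨ F = Gᶜ) ∧ A ⊆ C 0 ∧ s ≤ n * #A ∧
      SparseTo F η A (C j.succ) := by
  obtain ⟨x₀, hx₀⟩ := card_pos.1 ((hC 0).symm ▸ hs)
  have : Nonempty (Fin n) := ⟨(hbad x₀ hx₀).choose⟩
  have hn : (0 : ℝ) < n := by exact_mod_cast Fin.pos_iff_nonempty.2 this
  choose! g hg using hbad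
  obtain ⟨j, -, hj⟩ := exists_le_card_fiber_of_nsmul_le_card_of_maps_to (s := C 0)
    (t := univ) (f := g) (b := (s : ℝ) / n) (fun _ _ => mem_univ _) univ_nonempty
    (by rw [card_univ, Fintype.card_fin, nsmul_eq_mul, hC 0]; field_simp; rfl)
  obtain ⟨F, hF, hdeg⟩ := exists_degOn_eq_card_adj_iff G (H.Adj 0 j.succ)
  refine ⟨F, {x ∈ C 0 | g x = j}, j, hF, filter_subset _ _, ?_, fun a ha => ?_⟩
  · rw [div_le_iff₀ hn, mul_comm] at hj
    exact_mod_cast hj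
  · obtain ⟨haC, rfl⟩ := mem_filter.1 ha
    have haj : a ∉ C (g a).succ := fun h => lt_irrefl a (hord _ _ (Fin.succ_pos _) a haC a h)
    rw [hdeg a _ haj, hC]
    exact (hg a haC).le

/-- Embed `H` greedily, the `i`-th vertex into the `i`-th block, keeping in every later block
`⌈η s⌉` vertices with the right adjacency to the vertex just placed. -/
lemma exists_embedding_or_sparseTo {η : ℝ} (hη : 0 < η) (hη1 : η ≤ 1) :
    ∀ {n : ℕ} (H : SimpleGraph (Fin n)) (s : ℕ) (C : Fin n → Finset V), 0 < s →
      (∀ i, #(C i) = s) → (∀ i j, i < j → ∀ u ∈ C i, ∀ v ∈ C j, u < v) →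
      (∃ f : Fin n → V, (∀ i, f i ∈ C i) ∧ ∀ i j, G.Adj (f i) (f j) ↔ H.Adj i j) ∨
      ∃ F A B, (F = G ∨ F = Gᶜ) ∧ (∃ i j, i < j ∧ A ⊆ C i ∧ B ⊆ C j) ∧
        η ^ n * s ≤ #B ∧ #A ≤ #B ∧ #B ≤ n * #A ∧ SparseTo F η A B := by
  intro n
  induction n with
  | zero => exact fun H s C _ _ _ => Or.inl ⟨finZeroElim, finZeroElim, finZeroElim⟩
  | succ n ih =>
    intro H s C hs hC hord
    by_cases hgood : ∃ x ∈ C 0, ∀ j : Fin n,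
        η * s ≤ #{u ∈ C j.succ | G.Adj x u ↔ H.Adj 0 j.succ}
    swap
    · push Not at hgood
      obtain ⟨F, A, j, hF, hA, hsA, hsp⟩ :=
        exists_sparseTo_of_forall_exists_lt G H C hs hC hord hgood
      refine Or.inr ⟨F, A, C j.succ, hF, ⟨0, j.succ, Fin.succ_pos _, hA, subset_rfl⟩, ?_,
        (card_le_card hA).trans (hC 0 ▸ hC j.succ ▸ le_rfl), ?_, hsp⟩
      · rw [hC]
        exact mul_le_of_le_one_left (Nat.cast_nonneg _) (pow_le_one₀ hη.le hη1)
      · rw [hC]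
        exact hsA.trans (Nat.mul_le_mul_right _ n.le_succ)
    obtain ⟨x, hx, hxgood⟩ := hgood
    have hD : ∀ j : Fin n,
        ∃ D ⊆ {u ∈ C j.succ | G.Adj x u ↔ H.Adj 0 j.succ}, #D = ⌈η * s⌉₊ :=
      fun j => exists_subset_card_eq (Nat.ceil_le.2 (hxgood j))
    choose D hDsub hDcard using hD
    have hDC : ∀ j, D j ⊆ C j.succ := fun j => (hDsub j).trans (filter_subset _ _)
    rcases ih (H.comap Fin.succ) ⌈η * s⌉₊ D (Nat.ceil_pos.2 (by positivity)) hDcard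
        (fun i j hij u hu v hv =>
          hord _ _ (Fin.succ_lt_succ_iff.2 hij) u (hDC i hu) v (hDC j hv)) with
      ⟨f, hfD, hfadj⟩ | ⟨F, A, B, hF, ⟨i, j, hij, hA, hB⟩, hBsize, hAB, hBA, hsp⟩
    · have hxf : ∀ j, G.Adj x (f j) ↔ H.Adj 0 j.succ :=
        fun j => (mem_filter.1 (hDsub j (hfD j))).2
      refine Or.inl ⟨Fin.cons x f, fun i => Fin.cases hx (fun i => hDC i (hfD i)) i,
        fun i j => ?_⟩
      cases i using Fin.cases <;> cases j using Fin.cases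
      · simp
      · simpa using hxf _
      · simpa [G.adj_comm, H.adj_comm] using hxf _
      · simpa using hfadj _ _
    · refine Or.inr ⟨F, A, B, hF, ⟨i.succ, j.succ, Fin.succ_lt_succ_iff.2 hij,
        hA.trans (hDC i), hB.trans (hDC j)⟩, ?_, hAB, ?_, hsp⟩
      · calc η ^ (n + 1) * s = η ^ n * (η * s) := by ring
          _ ≤ η ^ n * ⌈η * s⌉₊ := by gcongr; exact Nat.le_ceil _
          _ ≤ #B := hBsize
      · exact hBA.trans (Nat.mul_le_mul_right _ n.le_succ)

end Greedy

section Pairs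

variable [LinearOrder V]

lemma exists_ordered_blocks (Y : Finset V) {n q : ℕ} (h : n * q ≤ #Y) :
    ∃ C : Fin n → Finset V, (∀ i, C i ⊆ Y) ∧ (∀ i, #(C i) = q) ∧
      ∀ i j, i < j → ∀ u ∈ C i, ∀ v ∈ C j, u < v := by
  set e := Y.orderEmbOfFin rfl
  let φ : Fin n → Fin q ↪ V := fun i =>
    ⟨fun r => e (Fin.castLE h (finProdFinEquiv (i, r))), fun r r' hr => by
      simpa using finProdFinEquiv.injective (Fin.castLE_injective h (e.injective hr))⟩
  refine ⟨fun i => univ.map (φ i), fun i => ?_, fun i => by simp, ?_⟩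
  · intro v hv
    obtain ⟨r, -, rfl⟩ := mem_map.1 hv
    exact Y.orderEmbOfFin_mem rfl _
  · intro i j hij u hu v hv
    obtain ⟨r, -, rfl⟩ := mem_map.1 hu
    obtain ⟨r', -, rfl⟩ := mem_map.1 hv
    refine e.strictMono (Fin.lt_def.2 ?_)
    have hij' : (i : ℕ) + 1 ≤ j := hij
    simp only [Fin.val_castLE, finProdFinEquiv_apply_val]
    nlinarith [r.isLt]

lemma ordGraphContains_of_isEmpty {W : Type} [LinearOrder W] [IsEmpty W] (G : SimpleGraph V)
    (H : SimpleGraph W) : OrdGraphContains G H :=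
  ⟨isEmptyElim, fun a => isEmptyElim a, fun a => isEmptyElim a⟩

variable {W : Type} [Fintype W] [LinearOrder W]

lemma exists_sparseTo_of_not_ordGraphContains {H : SimpleGraph W} {G : SimpleGraph V}
    (hG : ¬ OrdGraphContains G H) (hn : 0 < Fintype.card W) {η : ℝ} (hη : 0 < η)
    (hη1 : η ≤ 1) {Y : Finset V} (hY : Fintype.card W ≤ #Y) :
    ∃ F A B, (F = G ∨ F = Gᶜ) ∧ A ⊆ Y ∧ B ⊆ Y ∧ Disjoint A B ∧
      η ^ Fintype.card W * #Y / (2 * Fintype.card W) ≤ #B ∧ #A ≤ #B ∧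
      #B ≤ Fintype.card W * #A ∧ SparseTo F η A B := by
  set n := Fintype.card W
  let e : Fin n ≃o W := Fintype.orderIsoFinOfCardEq W rfl
  obtain ⟨C, hCY, hC, hord⟩ := exists_ordered_blocks Y (q := #Y / n) (Nat.mul_div_le _ _)
  rcases exists_embedding_or_sparseTo G hη hη1 (H.comap e) _ C (Nat.div_pos hY hn) hC hord with
    ⟨f, hfC, hf⟩ | ⟨F, A, B, hF, ⟨i, j, hij, hA, hB⟩, hBsize, hAB, hBA, hsp⟩
  · refine absurd ⟨f ∘ e.symm, fun a b hab => ?_, fun a b => ?_⟩ hG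
    · exact hord _ _ (e.symm.strictMono hab) _ (hfC _) _ (hfC _)
    · simpa using hf (e.symm a) (e.symm b)
  refine ⟨F, A, B, hF, hA.trans (hCY i), hB.trans (hCY j),
    disjoint_left.2 fun a ha hb => lt_irrefl a (hord i j hij a (hA ha) a (hB hb)),
    ?_, hAB, hBA, hsp⟩
  have hq : (#Y : ℝ) / (2 * n) ≤ (#Y / n : ℕ) := by
    have hlt : #Y < n * (#Y / n + 1) := Nat.lt_mul_div_succ _ hn
    have hpos : 1 ≤ #Y / n := Nat.div_pos hY hn
    rw [div_le_iff₀ (by positivity)]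
    exact_mod_cast (by nlinarith : #Y ≤ #Y / n * (2 * n))
  calc η ^ n * #Y / (2 * n) = η ^ n * (#Y / (2 * n)) := by ring
    _ ≤ η ^ n * (#Y / n : ℕ) := by gcongr
    _ ≤ #B := hBsize

lemma exists_isSparsePair (H : SimpleGraph W) {ε : ℝ} (hε : 0 < ε) :
    ∃ c : ℝ, 0 < c ∧ c ≤ 1 ∧ ∀ (V : Type) [LinearOrder V] (G : SimpleGraph V),
      ¬ OrdGraphContains G H → ∀ Y : Finset V, 1 ≤ c * #Y →
      ∃ F A B, (F = G ∨ F = Gᶜ) ∧ A ⊆ Y ∧ B ⊆ Y ∧ Disjoint A B ∧ #A = #B ∧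
        c * #Y ≤ #B ∧ IsSparsePair F ε A B := by
  set n := Fintype.card W
  rcases Nat.eq_zero_or_pos n with hn | hn
  · have : IsEmpty W := Fintype.card_eq_zero_iff.1 hn
    exact ⟨1, one_pos, le_rfl, fun V _ G hG => absurd (ordGraphContains_of_isEmpty G H) hG⟩
  have hn' : (1 : ℝ) ≤ n := by exact_mod_cast hn
  set η := min 1 (ε / (4 * n))
  have hη : 0 < η := lt_min one_pos (by positivity)
  have hηε : 4 * n * η ≤ ε := by
    have := min_le_right 1 (ε / (4 * n))
    rwa [le_div_iff₀ (by positivity), mul_comm] at this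
  have hηn : η ^ n ≤ 1 := pow_le_one₀ hη.le (min_le_left _ _)
  refine ⟨η ^ n / (4 * n ^ 2), by positivity,
    div_le_one_of_le₀ (by nlinarith) (by positivity), fun V _ G hG Y hY => ?_⟩
  have hYn : n ≤ #Y := by
    have hnc : (n : ℝ) * (η ^ n / (4 * n ^ 2)) ≤ 1 := by
      rw [mul_div_assoc', div_le_one (by positivity)]
      nlinarith
    have : (n : ℝ) ≤ #Y := calc
      (n : ℝ) ≤ n * (η ^ n / (4 * n ^ 2) * #Y) := le_mul_of_one_le_right (by positivity) hY
      _ = n * (η ^ n / (4 * n ^ 2)) * #Y := by ring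
      _ ≤ #Y := mul_le_of_le_one_left (Nat.cast_nonneg _) hnc
    exact_mod_cast this
  obtain ⟨F, A, B, hF, hAY, hBY, hAB, hBsize, hAB', hBA, hsp⟩ :=
    exists_sparseTo_of_not_ordGraphContains hG hn hη (min_le_left _ _) hYn
  have hA : A.Nonempty := by
    rw [← card_pos]
    refine Nat.pos_of_mul_pos_left (lt_of_lt_of_le ?_ hBA)
    have hYpos : (0 : ℝ) < #Y := by exact_mod_cast hn.trans_le hYn
    have : (0 : ℝ) < #B := lt_of_lt_of_le (by positivity) hBsize
    exact_mod_cast this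
  obtain ⟨A', hA', B', hB', hA'B', hBB', hsp'⟩ := hsp.exists_isSparsePair hη hA hAB' hBA
  refine ⟨F, A', B', hF, hA'.trans hAY, hB'.trans hBY, disjoint_of_subset_left hA'
    (disjoint_of_subset_right hB' hAB), hA'B', ?_, ?_⟩
  · calc η ^ n / (4 * n ^ 2) * #Y = η ^ n * #Y / (2 * n) / (2 * n) := by ring
      _ ≤ #B / (2 * n) := by gcongr
      _ ≤ #B' := by rw [div_le_iff₀ (by positivity)]; linarith
  · exact hsp'.mono (K := 1) (by positivity) subset_rfl subset_rfl (by simp) (by simp)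
      (by linarith)

end Pairs

section Blocks

variable {W : Type} [Fintype W] [LinearOrder W]

/-- Induction on `T`: take a sparse pair `(A, B)` in `Y` and recurse inside `B`, trimming `A` to
the common block size. -/
lemma exists_sparse_blocks (H : SimpleGraph W) (T : ℕ) :
    ∀ {ε : ℝ}, 0 < ε → ∃ β : ℝ, 0 < β ∧ β ≤ 1 ∧
      ∀ (V : Type) [LinearOrder V] (G : SimpleGraph V), ¬ OrdGraphContains G H →
      ∀ Y : Finset V, 1 ≤ β * #Y → ∃ m : ℕ, β * #Y ≤ m ∧ m ≤ #Y ∧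
        ∃ (S : Fin T → Finset V) (F : Fin T → SimpleGraph V),
          (∀ i, S i ⊆ Y) ∧ (∀ i, #(S i) = m) ∧ (∀ i, F i = G ∨ F i = Gᶜ) ∧
          ∀ i j, i < j → Disjoint (S i) (S j) ∧ IsSparsePair (F i) ε (S i) (S j) := by
  induction T with
  | zero =>
    exact fun _ => ⟨1, one_pos, le_rfl, fun V _ G _ Y _ =>
      ⟨#Y, by simp, le_rfl, finZeroElim, finZeroElim, finZeroElim, finZeroElim, finZeroElim,
        finZeroElim⟩⟩
  | succ T ih =>
    intro ε hε
    obtain ⟨β, hβ, hβ1, hblocks⟩ := ih hε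
    obtain ⟨c, hc, hc1, hpair⟩ := exists_isSparsePair H (mul_pos hε hβ)
    refine ⟨c * β, mul_pos hc hβ, mul_le_one₀ hc1 hβ.le hβ1, fun V _ G hG Y hY => ?_⟩
    obtain ⟨F, A, B, hF, hAY, hBY, hAB, hAB', hBsize, hsp⟩ :=
      hpair V G hG Y (hY.trans (by nlinarith [Nat.cast_nonneg (α := ℝ) #Y]))
    have hβB : c * β * #Y ≤ β * #B := by nlinarith
    obtain ⟨m, hm, hmB, S, F', hSB, hS, hF', hpairs⟩ := hblocks V G hG B (hY.trans hβB)
    obtain ⟨A', hA'A, hA'⟩ := exists_subset_card_eq (hmB.trans hAB'.ge)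
    have hsp' : ∀ j, IsSparsePair F ε A' (S j) := by
      intro j
      have hBm : (#B : ℝ) ≤ 1 / β * m := by
        rw [one_div_mul_eq_div, le_div_iff₀ hβ]
        linarith
      refine hsp.mono (K := 1 / β) (by positivity) hA'A (hSB j) ?_ ?_ (le_of_eq (by field_simp))
      · rwa [hA', hAB']
      · rwa [hS]
    refine ⟨m, hβB.trans hm, hmB.trans (card_le_card hBY), Fin.cons A' S, Fin.cons F F',
      Fin.cases (hA'A.trans hAY) fun i => (hSB i).trans hBY, Fin.cases hA' hS,
      Fin.cases hF hF', fun i j hij => ?_⟩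
    cases i using Fin.cases <;> cases j using Fin.cases
    · exact absurd hij (lt_irrefl _)
    · exact ⟨disjoint_of_subset_left hA'A (disjoint_of_subset_right (hSB _) hAB), hsp' _⟩
    · exact absurd hij (Fin.succ_pos _).not_gt
    · simpa using hpairs _ _ (Fin.succ_lt_succ_iff.1 hij)

end Blocks

lemma degOn_biUnion_lt {ι : Type} {F : SimpleGraph V} {Q : Finset ι} {S : ι → Finset V}
    {m : ℕ} {ε ε' : ℝ} (hm : 0 < m) (hε' : 0 ≤ ε') (hQ : 1 + ε' * #Q < ε * #Q)
    (hS : ∀ i ∈ Q, #(S i) = m) (hdisj : (Q : Set ι).PairwiseDisjoint S)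
    (hsp : ∀ i ∈ Q, ∀ j ∈ Q, i ≠ j → SparseTo F ε' (S i) (S j))
    {i : ι} (hi : i ∈ Q) {v : V} (hv : v ∈ S i) :
    (degOn F v (Q.biUnion S) : ℝ) < ε * #(Q.biUnion S) := by
  have hother : ∑ j ∈ Q.erase i, (degOn F v (S j) : ℝ) ≤ #Q * (ε' * m) := by
    refine (sum_le_card_nsmul _ _ (ε' * m) fun j hj => ?_).trans ?_
    · rw [← hS j (mem_of_mem_erase hj)]
      exact hsp i hi j (mem_of_mem_erase hj) (ne_of_mem_erase hj).symm v hv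
    · rw [nsmul_eq_mul]
      gcongr
      exact erase_subset _ _
  have hown : (degOn F v (S i) : ℝ) ≤ m := by exact_mod_cast hS i hi ▸ degOn_le_card F v (S i)
  rw [card_biUnion hdisj, sum_const_nat hS]
  calc (degOn F v (Q.biUnion S) : ℝ) ≤ ∑ j ∈ Q, (degOn F v (S j) : ℝ) := by
        exact_mod_cast degOn_biUnion_le F v Q S
    _ = degOn F v (S i) + ∑ j ∈ Q.erase i, (degOn F v (S j) : ℝ) :=
        (add_sum_erase _ _ hi).symm
    _ ≤ m + #Q * (ε' * m) := add_le_add hown hother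
    _ = (1 + ε' * #Q) * m := by ring
    _ < ε * #Q * m := by gcongr
    _ = ε * ↑(#Q * m) := by push_cast; ring

/-- By pigeonhole `T` of the `2T` blocks have pairs of the same type; take their union. -/
lemma exists_sparse_set_of_blocks {G : SimpleGraph V} {T m : ℕ} {ε : ℝ} (hε : 0 < ε)
    (hT : 2 ≤ ε * T) (hm : 0 < m) {S : Fin (2 * T) → Finset V}
    {F : Fin (2 * T) → SimpleGraph V} (hS : ∀ i, #(S i) = m)
    (hF : ∀ i, F i = G ∨ F i = Gᶜ)
    (hpairs : ∀ i j, i < j → Disjoint (S i) (S j) ∧ IsSparsePair (F i) (ε / 4) (S i) (S j)) :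
    ∃ F₀ : SimpleGraph V, (F₀ = G ∨ F₀ = Gᶜ) ∧ ∃ X : Finset V, m ≤ #X ∧
      ∀ v ∈ X, (degOn F₀ v X : ℝ) < ε * #X := by
  obtain ⟨F₀, hF₀, hQ⟩ := exists_le_card_fiber_of_nsmul_le_card_of_maps_to (s := univ)
    (t := ({G, Gᶜ} : Finset (SimpleGraph V))) (f := F) (b := (T : ℝ))
    (fun i _ => by simpa using hF i) (insert_nonempty _ _) (by
      rw [card_univ, Fintype.card_fin, nsmul_eq_mul]
      push_cast
      gcongr
      exact_mod_cast card_insert_le _ _)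
  set Q : Finset (Fin (2 * T)) := {i ∈ univ | F i = F₀}
  have hQ' : 2 ≤ ε * (#Q : ℝ) := hT.trans (by gcongr)
  have hdisj : (Q : Set (Fin (2 * T))).PairwiseDisjoint S := fun i _ j _ hij => by
    rcases hij.lt_or_gt with h | h
    exacts [(hpairs i j h).1, (hpairs j i h).1.symm]
  have hsp : ∀ i ∈ Q, ∀ j ∈ Q, i ≠ j → SparseTo F₀ (ε / 4) (S i) (S j) := by
    intro i hi j hj hij
    rcases hij.lt_or_gt with h | h
    · exact (mem_filter.1 hi).2 ▸ (hpairs i j h).2.1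
    · exact (mem_filter.1 hj).2 ▸ (hpairs j i h).2.2
  refine ⟨F₀, by simpa using hF₀, Q.biUnion S, ?_, fun v hv => ?_⟩
  · rw [card_biUnion hdisj, sum_const_nat fun i _ => hS i]
    have : (0 : ℝ) < #Q := pos_of_mul_pos_right (by linarith) hε.le
    exact Nat.le_mul_of_pos_left m (by exact_mod_cast this)
  · obtain ⟨i, hi, hv⟩ := mem_biUnion.1 hv
    exact degOn_biUnion_lt hm (by positivity) (by linarith) (fun i _ => hS i) hdisj hsp hi hv

end

/-- For every ordered graph `H` and every `ε > 0`, there exists `δ > 0`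
such that every `H`-free ordered graph `G` has a set `X` of at least `δ|G|` vertices
such that in one of `G[X]`, its complement, every vertex of `X` has degree less than
`ε|X|`. -/
theorem stmt_4 {W : Type} [Fintype W] [LinearOrder W] (H : SimpleGraph W)
    (ε : ℝ) (hε : 0 < ε) :
    ∃ δ : ℝ, 0 < δ ∧
      ∀ (V : Type) [Fintype V] [LinearOrder V] (G : SimpleGraph V),
        ¬ OrdGraphContains G H →
          ∃ X : Set V, δ * (Fintype.card V : ℝ) ≤ (X.ncard : ℝ) ∧
            ((∀ v ∈ X, ((G.neighborSet v ∩ X).ncard : ℝ) < ε * (X.ncard : ℝ)) ∨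
             (∀ v ∈ X, (((Gᶜ).neighborSet v ∩ X).ncard : ℝ) < ε * (X.ncard : ℝ))) := by
  set T := ⌈2 / ε⌉₊
  have hT : 2 ≤ ε * T := by
    have := Nat.le_ceil (2 / ε)
    rwa [div_le_iff₀ hε, mul_comm] at this
  obtain ⟨β, hβ, -, hblocks⟩ := exists_sparse_blocks H (2 * T) (ε := ε / 4) (by positivity)
  refine ⟨β, hβ, fun V _ _ G hG => ?_⟩
  rcases lt_or_ge (β * Fintype.card V) 1 with hsmall | hlarge
  · rcases isEmpty_or_nonempty V with _ | ⟨⟨v⟩⟩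
    · exact ⟨∅, by simp, Or.inl (by simp)⟩
    · refine ⟨{v}, by simpa using hsmall.le, Or.inl ?_⟩
      simpa using hε
  obtain ⟨m, hm, -, S, F, -, hS, hF, hpairs⟩ := hblocks V G hG univ (by rwa [card_univ])
  rw [card_univ] at hm
  have hm0 : 0 < m := by exact_mod_cast (one_pos.trans_le hlarge).trans_le hm
  obtain ⟨F₀, hF₀, X, hXm, hX⟩ := exists_sparse_set_of_blocks hε hT hm0 hS hF hpairs
  refine ⟨X, hm.trans (by simpa using hXm), ?_⟩
  simp only [ncard_neighborSet_inter_coe, Set.ncard_coe_finset]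
  rcases hF₀ with rfl | rfl
  exacts [Or.inl hX, Or.inr hX]
end

section
/- Let (B_i : i∈I) be a blockade in a graph G, let 0 < φ, μ ≤ 1, and let β = μ^{1 + |I|²/φ}. Then either (a) there exist distinct h, j ∈ I and subsets B_h' ⊆ B_h and B_j' ⊆ B_j with |B_h'|/|B_h|, |B_j'|/|B_j| ≥ β such that B_h' is anticomplete to B_j'; or (b) there is a (φ,μ)-shrink-resistant contraction (B_i' : i∈I) of (B_i : i∈I) such that |B_i'| ≥ β|B_i| for each i ∈ I. -/
lemma Finset.sum_add_pi_single_of_mem {ι M : Type*} [DecidableEq ι] [AddCommMonoid M]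
    {s : Finset ι} {q : ι} (hq : q ∈ s) (f : ι → M) (a : M) :
    ∑ p ∈ s, (f + Pi.single q a : ι → M) p = ∑ p ∈ s, f p + a := by
  simp only [Pi.add_apply, Finset.sum_add_distrib, Finset.sum_pi_single', if_pos hq]

section MaxDegFrom

variable {V : Type} (G : SimpleGraph V)

lemma ncard_inter_le_maxDegFrom {X Y : Set V} (hY : Y.Finite) {v : V} (hv : v ∈ X) :
    (G.neighborSet v ∩ Y).ncard ≤ maxDegFrom G X Y :=
  le_csSup ⟨Y.ncard, by rintro _ ⟨w, -, rfl⟩; exact Set.ncard_inter_le_ncard_right _ _ hY⟩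
    ⟨v, hv, rfl⟩

lemma maxDegFrom_le_ncard {X Y : Set V} (hY : Y.Finite) : maxDegFrom G X Y ≤ Y.ncard :=
  csSup_le' <| by rintro _ ⟨v, -, rfl⟩; exact Set.ncard_inter_le_ncard_right _ _ hY

lemma maxDegFrom_mono {X' X Y' Y : Set V} (hY : Y.Finite) (hX : X' ⊆ X) (hY' : Y' ⊆ Y) :
    maxDegFrom G X' Y' ≤ maxDegFrom G X Y :=
  csSup_le' <| by
    rintro _ ⟨v, hv, rfl⟩
    exact (Set.ncard_le_ncard (Set.inter_subset_inter_right _ hY') (hY.inter_of_right _)).trans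
      (ncard_inter_le_maxDegFrom G hY (hX hv))

lemma exists_adj_of_maxDegFrom_ne_zero {X Y : Set V} (h : maxDegFrom G X Y ≠ 0) :
    ∃ x ∈ X, ∃ y ∈ Y, G.Adj x y := by
  by_contra! hXY
  refine h (Nat.le_zero.mp (csSup_le' ?_))
  rintro _ ⟨v, hv, rfl⟩
  have hempty : G.neighborSet v ∩ Y = ∅ :=
    Set.eq_empty_of_forall_notMem fun y hy => hXY v hv y hy.2 hy.1
  simp only [hempty, Set.ncard_empty, le_refl]

-- `hY` is needed: an unbounded `sSup` in `ℕ` is `0`.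
lemma anticompSets_of_maxDegFrom_eq_zero {X Y : Set V} (hY : Y.Finite)
    (h : maxDegFrom G X Y = 0) : AnticompSets G X Y := fun _ hx y hy hxy =>
  (ncard_inter_le_maxDegFrom G hY hx).not_gt <|
    h ▸ (Set.ncard_pos (hY.inter_of_right _)).mpr ⟨y, hxy, hy⟩

end MaxDegFrom

section Outcomes

variable {V : Type} (G : SimpleGraph V) (I : Finset ℤ) (B : ℤ → Set V)

def HasAnticompletePair (β : ℝ) : Prop :=
  ∃ h ∈ I, ∃ j ∈ I, h ≠ j ∧ ∃ Bh' ⊆ B h, ∃ Bj' ⊆ B j,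
    β * ((B h).ncard : ℝ) ≤ (Bh'.ncard : ℝ) ∧ β * ((B j).ncard : ℝ) ≤ (Bj'.ncard : ℝ) ∧
    AnticompSets G Bh' Bj'

def HasShrinkResistantContraction [Fintype V] (phi mu β : ℝ) : Prop :=
  ∃ B' : ℤ → Set V, (∀ i ∈ I, B' i ⊆ B i ∧ (B' i).Nonempty) ∧ ShrinkResistant G I B' phi mu ∧
    ∀ i ∈ I, β * ((B i).ncard : ℝ) ≤ ((B' i).ncard : ℝ)

variable {G I B}

lemma HasAnticompletePair.mono {β β' : ℝ} (hβ : β' ≤ β) (h : HasAnticompletePair G I B β) :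
    HasAnticompletePair G I B β' := by
  obtain ⟨h, hh, j, hj, hhj, X, hX, Y, hY, hXcard, hYcard, hXY⟩ := h
  exact ⟨h, hh, j, hj, hhj, X, hX, Y, hY,
    (mul_le_mul_of_nonneg_right hβ (by positivity)).trans hXcard,
    (mul_le_mul_of_nonneg_right hβ (by positivity)).trans hYcard, hXY⟩

lemma HasShrinkResistantContraction.mono [Fintype V] {phi mu β β' : ℝ} (hβ : β' ≤ β)
    (h : HasShrinkResistantContraction G I B phi mu β) :
    HasShrinkResistantContraction G I B phi mu β' := by
  obtain ⟨B', hB', hsr, hcard⟩ := h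
  exact ⟨B', hB', hsr, fun i hi =>
    (mul_le_mul_of_nonneg_right hβ (by positivity)).trans (hcard i hi)⟩

end Outcomes

section ShrinkState

variable {V : Type} [Fintype V] (G : SimpleGraph V) (I : Finset ℤ) (B : ℤ → Set V)

structure IsShrinkState (phi mu : ℝ) (B' : ℤ → Set V) (t : ℤ × ℤ → ℕ) : Prop where
  subset_nonempty : ∀ i ∈ I, B' i ⊆ B i ∧ (B' i).Nonempty
  maxDegFrom_le : ∀ h ∈ I, ∀ j ∈ I, h ≠ j →
    (maxDegFrom G (B' h) (B' j) : ℝ) ≤ (Fintype.card V : ℝ) ^ (1 - phi * t (h, j))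
  mul_le_one : ∀ p, phi * t p ≤ 1
  pow_mul_le_ncard : ∀ i ∈ I, mu ^ (∑ p ∈ I ×ˢ I, t p) * ((B i).ncard : ℝ) ≤ (B' i).ncard

variable {G I B} {phi mu : ℝ}

lemma isShrinkState_self (hB : ∀ i ∈ I, (B i).Nonempty) : IsShrinkState G I B phi mu B 0 where
  subset_nonempty i hi := ⟨subset_rfl, hB i hi⟩
  maxDegFrom_le h _ j _ _ := by
    have hle : maxDegFrom G (B h) (B j) ≤ Fintype.card V :=
      (maxDegFrom_le_ncard G (B j).toFinite).trans <|
        (Set.ncard_le_ncard (Set.subset_univ _)).trans_eq (by simp)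
    simpa using (Nat.cast_le (α := ℝ)).mpr hle
  mul_le_one _ := by simp
  pow_mul_le_ncard _ _ := by simp

namespace IsShrinkState

variable {B' : ℤ → Set V} {t : ℤ × ℤ → ℕ}

lemma sum_le (hs : IsShrinkState G I B phi mu B' t) (hphi : 0 < phi) :
    ((∑ p ∈ I ×ˢ I, t p : ℕ) : ℝ) ≤ (I.card : ℝ) ^ 2 / phi := by
  have ht : ∀ p ∈ I ×ˢ I, (t p : ℝ) ≤ 1 / phi := fun p _ => by
    rw [le_div_iff₀ hphi, mul_comm]; exact hs.mul_le_one p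
  calc ((∑ p ∈ I ×ˢ I, t p : ℕ) : ℝ) = ∑ p ∈ I ×ˢ I, (t p : ℝ) := by push_cast; rfl
    _ ≤ (I ×ˢ I).card • (1 / phi) := Finset.sum_le_card_nsmul _ _ _ ht
    _ = (I.card : ℝ) ^ 2 / phi := by rw [Finset.card_product, nsmul_eq_mul]; push_cast; ring

lemma pow_succ_mul_le (hs : IsShrinkState G I B phi mu B' t) (hmu : 0 ≤ mu) {i : ℤ} (hi : i ∈ I)
    {X : Set V} (hX : mu * ((B' i).ncard : ℝ) ≤ X.ncard) :
    mu ^ (∑ p ∈ I ×ˢ I, t p + 1) * ((B i).ncard : ℝ) ≤ X.ncard :=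
  calc mu ^ (∑ p ∈ I ×ˢ I, t p + 1) * ((B i).ncard : ℝ)
      = mu * (mu ^ (∑ p ∈ I ×ˢ I, t p) * (B i).ncard) := by ring
    _ ≤ mu * (B' i).ncard := mul_le_mul_of_nonneg_left (hs.pow_mul_le_ncard i hi) hmu
    _ ≤ X.ncard := hX

lemma shrink (hs : IsShrinkState G I B phi mu B' t) (hmu0 : 0 ≤ mu) (hmu1 : mu ≤ 1)
    {h j : ℤ} (hh : h ∈ I) (hj : j ∈ I) (hhj : h ≠ j) {X Y : Set V}
    (hXB : X ⊆ B' h) (hYB : Y ⊆ B' j)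
    (hX : mu * ((B' h).ncard : ℝ) ≤ X.ncard) (hY : mu * ((B' j).ncard : ℝ) ≤ Y.ncard)
    (hdeg : (maxDegFrom G X Y : ℝ) ≤
      maxDegFrom G (B' h) (B' j) * (Fintype.card V : ℝ) ^ (-phi))
    (hXY : maxDegFrom G X Y ≠ 0) :
    IsShrinkState G I B phi mu (Function.update (Function.update B' h X) j Y)
      (t + Pi.single (h, j) 1) := by
  set B'' := Function.update (Function.update B' h X) j Y
  set n : ℝ := (Fintype.card V : ℝ)
  obtain ⟨x, hx, y, hy, hxy⟩ := exists_adj_of_maxDegFrom_ne_zero G hXY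
  have hn : 1 < n := Nat.one_lt_cast.mpr (Fintype.one_lt_card_iff.mpr ⟨x, y, G.ne_of_adj hxy⟩)
  have hB'' : ∀ a ∈ I,
      B'' a ⊆ B' a ∧ (B'' a).Nonempty ∧ mu * ((B' a).ncard : ℝ) ≤ (B'' a).ncard := by
    intro a ha
    simp only [B'', Function.update_apply]
    split_ifs with haj hah
    · subst haj; exact ⟨hYB, ⟨y, hy⟩, hY⟩
    · subst hah; exact ⟨hXB, ⟨x, hx⟩, hX⟩
    · exact ⟨subset_rfl, (hs.subset_nonempty a ha).2,
        mul_le_of_le_one_left (by positivity) hmu1⟩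
  have hpair : (maxDegFrom G X Y : ℝ) ≤ n ^ (1 - phi * (t (h, j) + 1)) :=
    calc (maxDegFrom G X Y : ℝ) ≤ maxDegFrom G (B' h) (B' j) * n ^ (-phi) := hdeg
      _ ≤ n ^ (1 - phi * t (h, j)) * n ^ (-phi) := by
        gcongr; exact hs.maxDegFrom_le h hh j hj hhj
      _ = n ^ (1 - phi * (t (h, j) + 1)) := by
        rw [← Real.rpow_add (by positivity)]; ring_nf
  have hexp : phi * (t (h, j) + 1) ≤ 1 := by
    by_contra! hlt
    have h1 : (1 : ℝ) ≤ maxDegFrom G X Y := by exact_mod_cast Nat.one_le_iff_ne_zero.mpr hXY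
    linarith [Real.rpow_lt_one_of_one_lt_of_neg hn (by linarith : 1 - phi * (t (h, j) + 1) < 0)]
  refine ⟨fun i hi => ⟨(hB'' i hi).1.trans (hs.subset_nonempty i hi).1, (hB'' i hi).2.1⟩,
    fun a ha b hb hab => ?_, fun p => ?_, fun i hi => ?_⟩
  · by_cases hp : (a, b) = (h, j)
    · obtain ⟨rfl, rfl⟩ := Prod.ext_iff.mp hp
      simpa [B'', Function.update_of_ne hhj] using hpair
    · rw [Pi.add_apply, Pi.single_eq_of_ne hp, add_zero]
      exact (Nat.cast_le.mpr (maxDegFrom_mono G (B' b).toFinite (hB'' a ha).1 (hB'' b hb).1)).trans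
        (hs.maxDegFrom_le a ha b hb hab)
  · by_cases hp : p = (h, j)
    · subst hp; simpa using hexp
    · simpa [Pi.single_eq_of_ne hp] using hs.mul_le_one p
  · rw [Finset.sum_add_pi_single_of_mem (Finset.mk_mem_product hh hj)]
    exact hs.pow_succ_mul_le hmu0 hi (hB'' i hi).2.2

lemma step (hs : IsShrinkState G I B phi mu B' t) (hmu0 : 0 ≤ mu) (hmu1 : mu ≤ 1) :
    HasAnticompletePair G I B (mu ^ (∑ p ∈ I ×ˢ I, t p + 1)) ∨
    HasShrinkResistantContraction G I B phi mu (mu ^ ∑ p ∈ I ×ˢ I, t p) ∨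
    ∃ B'' t'', IsShrinkState G I B phi mu B'' t'' ∧
      ∑ p ∈ I ×ˢ I, t'' p = ∑ p ∈ I ×ˢ I, t p + 1 := by
  by_cases hsr : ShrinkResistant G I B' phi mu
  · exact Or.inr (Or.inl ⟨B', hs.subset_nonempty, hsr, hs.pow_mul_le_ncard⟩)
  simp only [ShrinkResistant, not_forall, not_lt] at hsr
  obtain ⟨h, hh, j, hj, hhj, X, hXB, Y, hYB, hX, hY, hdeg⟩ := hsr
  by_cases hXY : maxDegFrom G X Y = 0
  · exact Or.inl ⟨h, hh, j, hj, hhj, X, hXB.trans (hs.subset_nonempty h hh).1,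
      Y, hYB.trans (hs.subset_nonempty j hj).1, hs.pow_succ_mul_le hmu0 hh hX,
      hs.pow_succ_mul_le hmu0 hj hY, anticompSets_of_maxDegFrom_eq_zero G Y.toFinite hXY⟩
  · exact Or.inr (Or.inr ⟨_, _, hs.shrink hmu0 hmu1 hh hj hhj hXB hYB hX hY hdeg hXY,
      Finset.sum_add_pi_single_of_mem (Finset.mk_mem_product hh hj) t 1⟩)

end IsShrinkState

end ShrinkState

theorem stmt_5_general {V : Type} [Fintype V] (G : SimpleGraph V) (I : Finset ℤ)
    (B : ℤ → Set V) (hB : IsBlockade I B)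
    (phi mu : ℝ) (hphi0 : 0 < phi) (hmu0 : 0 < mu) (hmu1 : mu ≤ 1) :
    (∃ h ∈ I, ∃ j ∈ I, h ≠ j ∧ ∃ Bh' ⊆ B h, ∃ Bj' ⊆ B j,
        mu ^ ((1 : ℝ) + (I.card : ℝ) ^ 2 / phi) * ((B h).ncard : ℝ) ≤ (Bh'.ncard : ℝ) ∧
        mu ^ ((1 : ℝ) + (I.card : ℝ) ^ 2 / phi) * ((B j).ncard : ℝ) ≤ (Bj'.ncard : ℝ) ∧
        AnticompSets G Bh' Bj') ∨
    (∃ B' : ℤ → Set V, (∀ i ∈ I, B' i ⊆ B i ∧ (B' i).Nonempty) ∧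
        ShrinkResistant G I B' phi mu ∧
        ∀ i ∈ I, mu ^ ((1 : ℝ) + (I.card : ℝ) ^ 2 / phi) * ((B i).ncard : ℝ)
          ≤ ((B' i).ncard : ℝ)) := by
  set β := mu ^ ((1 : ℝ) + (I.card : ℝ) ^ 2 / phi)
  have hβ : ∀ B' t, IsShrinkState G I B phi mu B' t → β ≤ mu ^ (∑ p ∈ I ×ˢ I, t p + 1) :=
    fun B' t hs => by
      have hsum := hs.sum_le hphi0
      rw [← Real.rpow_natCast]
      push_cast at hsum ⊢
      exact Real.rpow_le_rpow_of_exponent_ge' hmu0.le hmu1 (by positivity) (by linarith)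
  by_contra hno
  have hstates : ∀ m : ℕ,
      ∃ B' t, IsShrinkState G I B phi mu B' t ∧ ∑ p ∈ I ×ˢ I, t p = m := by
    intro m
    induction m with
    | zero => exact ⟨B, 0, isShrinkState_self hB.1, by simp⟩
    | succ m ih =>
      obtain ⟨B', t, hs, rfl⟩ := ih
      rcases hs.step hmu0.le hmu1 with hpair | hcontr | hnext
      · exact absurd (Or.inl (hpair.mono (hβ B' t hs))) hno
      · exact absurd (Or.inr (hcontr.mono ((hβ B' t hs).trans
          (pow_le_pow_of_le_one hmu0.le hmu1 (Nat.le_succ _))))) hno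
      · exact hnext
  obtain ⟨B', t, hs, hm⟩ := hstates (⌊(I.card : ℝ) ^ 2 / phi⌋₊ + 1)
  have hbound := hs.sum_le hphi0
  rw [hm] at hbound
  push_cast at hbound
  linarith [Nat.lt_floor_add_one ((I.card : ℝ) ^ 2 / phi)]

/-- If `(B i : i ∈ I)` is a blockade in `G`, `0 < φ, μ ≤ 1`, and
`β = μ^(1 + |I|²/φ)`, then either there are distinct `h, j ∈ I` and anticomplete
subsets `B_h' ⊆ B h`, `B_j' ⊆ B j` with `|B_h'|/|B h|, |B_j'|/|B j| ≥ β`, or there is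
a `(φ,μ)`-shrink-resistant contraction `(B' i : i ∈ I)` with `|B' i| ≥ β|B i|`. -/
theorem stmt_5 {V : Type} [Fintype V] (G : SimpleGraph V) (I : Finset ℤ)
    (B : ℤ → Set V) (hB : IsBlockade I B)
    (phi mu : ℝ) (hphi0 : 0 < phi) (hphi1 : phi ≤ 1) (hmu0 : 0 < mu) (hmu1 : mu ≤ 1) :
    (∃ h ∈ I, ∃ j ∈ I, h ≠ j ∧ ∃ Bh' ⊆ B h, ∃ Bj' ⊆ B j,
        mu ^ ((1 : ℝ) + (I.card : ℝ) ^ 2 / phi) * ((B h).ncard : ℝ) ≤ (Bh'.ncard : ℝ) ∧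
        mu ^ ((1 : ℝ) + (I.card : ℝ) ^ 2 / phi) * ((B j).ncard : ℝ) ≤ (Bj'.ncard : ℝ) ∧
        AnticompSets G Bh' Bj') ∨
    (∃ B' : ℤ → Set V, (∀ i ∈ I, B' i ⊆ B i ∧ (B' i).Nonempty) ∧
        ShrinkResistant G I B' phi mu ∧
        ∀ i ∈ I, mu ^ ((1 : ℝ) + (I.card : ℝ) ^ 2 / phi) * ((B i).ncard : ℝ)
          ≤ ((B' i).ncard : ℝ)) :=
  stmt_5_general G I B hB phi mu hphi0 hmu0 hmu1
end
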